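/- Spectral gap inequality for symmetric simple exclusion on a segment (Proposition 4.3). There exists a universal constant κ₀ such that for every ℓ ∈ ℕ, every ρ ∈ [0,1], and every function f : {0,1}^ℤ → ℝ which is local with supp(f) ⊆ {1,…,ℓ} and satisfies φ_f(β) = 0 for every β ∈ [0,1], one has ∫ f² dν_ρ ≤ κ₀ ℓ² E_ℓ(f), where E_ℓ(f) = Σ_{x=1}^{ℓ−1} ∫ (∇_{x,x+1} f)² dν_ρ. -/

import Mathlib

/-!
Both sides are combinations, with the weights `ρ^m (1-ρ)^(ℓ-m)`, of sums over the slices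
`{S ⊆ {1,…,ℓ} : #S = m}` (configurations with `m` particles), and `φ_f ≡ 0` says exactly that `f`
sums to zero on every slice. So it suffices to prove the spectral gap `∑ f² ≤ 4 n² 𝒟(f)` of the
exclusion process on each slice of `{1,…,n}`, for `f` of mean zero. This goes by the Lu–Yau
induction on `n`: splitting the slice according to the occupation of `n + 1`, the variance is
the sum of the two conditional variances, handled by induction, and of the variance of the
conditional mean. The difference of the two conditional means is an average of
`f (T ∪ {n+1}) - f (T ∪ {x})`, a gradient along the transposition `(x, n+1)`, and a transposition
`(x, y)` costs at most `4 (y - x)` times the nearest-neighbour Dirichlet form.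
-/

open MeasureTheory Finset

noncomputable section

/-- Configurations of the lattice gas: elements of `{0,1}^ℤ`, encoded as `ℤ → Bool`. -/
abbrev Cfg : Type := ℤ → Bool

/-- The configuration whose occupied sites are exactly the finite set `S`. -/
def cfgOf (S : Finset ℤ) : Cfg := fun z => decide (z ∈ S)

/-- `f` depends only on the coordinates in the finite set `A`
(i.e. `f` is local with `supp f ⊆ A`). -/
def LocalOn (A : Finset ℤ) (f : Cfg → ℝ) : Prop :=
  ∀ η ξ : Cfg, (∀ x ∈ A, η x = ξ x) → f η = f ξ

/-- `f` is a local function. -/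
def IsLocal (f : Cfg → ℝ) : Prop := ∃ A : Finset ℤ, LocalOn A f

/-- For `f` depending only on the coordinates in `A`, `phi A f β = ∫ f dν_β` where `ν_β`
is the Bernoulli product measure of density `β`; written as an explicit polynomial in `β`. -/
def phi (A : Finset ℤ) (f : Cfg → ℝ) (β : ℝ) : ℝ :=
  ∑ S ∈ A.powerset, β ^ S.card * (1 - β) ^ (A.card - S.card) * f (cfgOf S)

/-- `ψ_f(ℓ; m)`: the average of `f` over all configurations of `{1,…,ℓ}`
having exactly `m` particles. -/
def condAvg (ℓ m : ℕ) (f : Cfg → ℝ) : ℝ :=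
  (∑ S ∈ (Finset.Icc (1 : ℤ) (ℓ : ℤ)).powerset.filter (fun S => S.card = m), f (cfgOf S))
    / (ℓ.choose m : ℝ)

/-- `μ` is the product Bernoulli measure on `{0,1}^ℤ` of density `ρ`: it is a probability
measure under which the coordinates are i.i.d. with `μ(η x = 1) = ρ`. -/
def IsBernoulliProduct (ρ : ℝ) (μ : Measure Cfg) : Prop :=
  IsProbabilityMeasure μ ∧
    ∀ (A : Finset ℤ) (σ : Cfg),
      (μ {η : Cfg | ∀ x ∈ A, η x = σ x}).toReal
        = ∏ x ∈ A, (if σ x then ρ else 1 - ρ)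

/-- The number of particles of `η` in `{1,…,ℓ}`. -/
def numOnes (ℓ : ℕ) (η : Cfg) : ℕ := ∑ x ∈ Finset.Icc (1 : ℤ) (ℓ : ℤ), (η x).toNat

/-- The empirical density `η^ℓ` of particles in `{1,…,ℓ}`. -/
def empDens (ℓ : ℕ) (η : Cfg) : ℝ := (numOnes ℓ η : ℝ) / (ℓ : ℝ)

/-- `ψ_f(ℓ)`: the conditional expectation of `f` given the particle number in `{1,…,ℓ}`,
as a function on configurations. -/
def psiFun (ℓ : ℕ) (f : Cfg → ℝ) : Cfg → ℝ := fun η => condAvg ℓ (numOnes ℓ η) f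

/-- The variance of `g` with respect to the measure `μ`. -/
def Var (μ : Measure Cfg) (g : Cfg → ℝ) : ℝ := ∫ η, (g η - ∫ ξ, g ξ ∂μ) ^ 2 ∂μ

/-- The configuration `η^{x,y}`, obtained from `η` by exchanging coordinates `x` and `y`. -/
def swapCfg (x y : ℤ) (η : Cfg) : Cfg :=
  fun z => if z = x then η y else if z = y then η x else η z

/-- `∇_{x,y} f (η) = f(η^{x,y}) - f(η)`. -/
def discGrad (x y : ℤ) (f : Cfg → ℝ) : Cfg → ℝ := fun η => f (swapCfg x y η) - f η

section SqDev

variable {ι : Type*}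

/-- `∑ i ∈ s, (f i - m)²` with `m` the mean of `f` on `s`, i.e. `#s` times the variance of `f`
under the uniform distribution on `s`. -/
def sqDev (s : Finset ι) (f : ι → ℝ) : ℝ :=
  ∑ i ∈ s, f i ^ 2 - (∑ i ∈ s, f i) ^ 2 / #s

lemma sqDev_of_card_le_one {s : Finset ι} (hs : #s ≤ 1) (f : ι → ℝ) : sqDev s f = 0 := by
  obtain hs | hs := Nat.le_one_iff_eq_zero_or_eq_one.mp hs
  · simp [sqDev, card_eq_zero.mp hs]
  · obtain ⟨i, rfl⟩ := card_eq_one.mp hs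
    simp [sqDev]

lemma sqDev_of_sum_eq_zero {s : Finset ι} {f : ι → ℝ} (hf : ∑ i ∈ s, f i = 0) :
    sqDev s f = ∑ i ∈ s, f i ^ 2 := by
  simp [sqDev, hf]

lemma sqDev_image [DecidableEq ι] {κ : Type*} {s : Finset κ} {e : κ → ι} (he : Set.InjOn e s)
    (f : ι → ℝ) : sqDev (s.image e) f = sqDev s (f ∘ e) := by
  simp only [sqDev, sum_image he, card_image_of_injOn he, Function.comp]

lemma sqDev_union [DecidableEq ι] {s t : Finset ι} (hst : Disjoint s t) (f : ι → ℝ) :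
    sqDev (s ∪ t) f = sqDev s f + sqDev t f
      + #s * #t / (#s + #t) * ((∑ i ∈ s, f i) / #s - (∑ i ∈ t, f i) / #t) ^ 2 := by
  simp only [sqDev, sum_union hst, card_union_of_disjoint hst, Nat.cast_add]
  rcases s.eq_empty_or_nonempty with rfl | hs
  · simp
  rcases t.eq_empty_or_nonempty with rfl | ht
  · simp
  have hs' : (#s : ℝ) ≠ 0 := by exact_mod_cast hs.card_pos.ne'
  have ht' : (#t : ℝ) ≠ 0 := by exact_mod_cast ht.card_pos.ne'
  have hst' : (#s : ℝ) + #t ≠ 0 := by positivity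
  field_simp
  ring

end SqDev

lemma sum_sigma_sdiff_insert {α : Type*} [DecidableEq α] (A : Finset α) (k : ℕ)
    (h : Finset α → ℝ) :
    ∑ p ∈ (A.powersetCard k).sigma (A \ ·), h (insert p.2 p.1)
      = (k + 1) * ∑ U ∈ A.powersetCard (k + 1), h U := by
  have hcount : ∀ U ∈ A.powersetCard (k + 1), ((k : ℝ) + 1) * h U = ∑ _x ∈ U, h U := by
    intro U hU
    simp [(mem_powersetCard.mp hU).2]
  rw [mul_sum, sum_congr rfl hcount, sum_sigma']
  refine sum_nbij' (fun p ↦ ⟨insert p.2 p.1, p.2⟩) (fun q ↦ ⟨q.1.erase q.2, q.2⟩)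
    ?_ ?_ ?_ ?_ (fun _ _ ↦ rfl)
  · rintro ⟨T, x⟩ hp
    simp only [mem_sigma, mem_powersetCard, mem_sdiff] at hp ⊢
    exact ⟨⟨insert_subset hp.2.1 hp.1.1, by rw [card_insert_of_notMem hp.2.2, hp.1.2]⟩,
      mem_insert_self _ _⟩
  · rintro ⟨U, x⟩ hq
    simp only [mem_sigma, mem_powersetCard, mem_sdiff] at hq ⊢
    exact ⟨⟨(erase_subset _ _).trans hq.1.1, by rw [card_erase_of_mem hq.2, hq.1.2]; rfl⟩,
      hq.1.1 hq.2, notMem_erase _ _⟩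
  · rintro ⟨T, x⟩ hp
    simp only [mem_sigma, mem_sdiff] at hp
    simp [erase_insert hp.2.2]
  · rintro ⟨U, x⟩ hq
    simp [insert_erase (mem_sigma.mp hq).2]

lemma card_sigma_sdiff {α : Type*} [DecidableEq α] (A : Finset α) (k : ℕ) :
    #((A.powersetCard k).sigma (A \ ·)) = (#A).choose k * (#A - k) := by
  rw [card_sigma, sum_congr rfl fun T hT ↦ by
    rw [card_sdiff_of_subset (mem_powersetCard.mp hT).1, (mem_powersetCard.mp hT).2]]
  simp

def swapSet (x y : ℤ) (S : Finset ℤ) : Finset ℤ := S.map (Equiv.swap x y).toEmbedding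

@[simp]
lemma mem_swapSet {x y z : ℤ} {S : Finset ℤ} :
    z ∈ swapSet x y S ↔ Equiv.swap x y z ∈ S := by
  simp [swapSet, mem_map_equiv]

@[simp]
lemma swapSet_swapSet (x y : ℤ) (S : Finset ℤ) : swapSet x y (swapSet x y S) = S := by
  ext z; simp

lemma swapSet_subset {x y : ℤ} {A S : Finset ℤ} (hx : x ∈ A) (hy : y ∈ A) (hS : S ⊆ A) :
    swapSet x y S ⊆ A := by
  intro z hz
  rw [mem_swapSet] at hz
  rcases eq_or_ne z x with rfl | hzx
  · exact hx
  rcases eq_or_ne z y with rfl | hzy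
  · exact hy
  · exact hS (by rwa [Equiv.swap_apply_of_ne_of_ne hzx hzy] at hz)

lemma swapSet_conj {x y : ℤ} (hxy : x < y) (S : Finset ℤ) :
    swapSet y (y + 1) (swapSet x y (swapSet y (y + 1) S)) = swapSet x (y + 1) S := by
  ext z
  simp only [mem_swapSet, Equiv.swap_apply_def]
  split_ifs <;> first | omega | simp_all

lemma swapSet_insert_right {x y : ℤ} {T : Finset ℤ} (hx : x ∉ T) (hy : y ∉ T) :
    swapSet x y (insert y T) = insert x T := by
  ext z
  simp only [mem_swapSet, mem_insert, Equiv.swap_apply_def]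
  split_ifs <;> grind

lemma swapSet_insert_of_ne {x y z : ℤ} (hx : z ≠ x) (hy : z ≠ y) (T : Finset ℤ) :
    swapSet x y (insert z T) = insert z (swapSet x y T) := by
  simp [swapSet, Equiv.swap_apply_of_ne_of_ne hx hy]

lemma swapCfg_cfgOf (x y : ℤ) (S : Finset ℤ) :
    swapCfg x y (cfgOf S) = cfgOf (swapSet x y S) := by
  funext z
  simp only [swapCfg, cfgOf, mem_swapSet, Equiv.swap_apply_def]
  split_ifs <;> simp_all

/-- The configurations of `m` particles on `{1, …, n}`, encoded by their sets of occupied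
sites. -/
def cubeSlice (n m : ℕ) : Finset (Finset ℤ) := (Icc (1 : ℤ) n).powersetCard m

lemma card_cubeSlice (n m : ℕ) : #(cubeSlice n m) = n.choose m := by
  simp [cubeSlice]

lemma card_cubeSlice_pos {n m : ℕ} (hm : m ≤ n) : (0 : ℝ) < #(cubeSlice n m) := by
  simpa [card_cubeSlice] using Nat.choose_pos hm

lemma swapSet_mem_cubeSlice {n m : ℕ} {x y : ℤ} {S : Finset ℤ} (hx : x ∈ Icc (1 : ℤ) n)
    (hy : y ∈ Icc (1 : ℤ) n) (hS : S ∈ cubeSlice n m) : swapSet x y S ∈ cubeSlice n m := by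
  rw [cubeSlice, mem_powersetCard] at hS ⊢
  exact ⟨swapSet_subset hx hy hS.1, by simp [swapSet, hS.2]⟩

lemma sum_cubeSlice_swapSet {n m : ℕ} {x y : ℤ} (hx : x ∈ Icc (1 : ℤ) n)
    (hy : y ∈ Icc (1 : ℤ) n) (h : Finset ℤ → ℝ) :
    ∑ S ∈ cubeSlice n m, h (swapSet x y S) = ∑ S ∈ cubeSlice n m, h S :=
  sum_nbij' (swapSet x y) (swapSet x y) (fun _ hS ↦ swapSet_mem_cubeSlice hx hy hS)
    (fun _ hS ↦ swapSet_mem_cubeSlice hx hy hS) (fun S _ ↦ swapSet_swapSet x y S)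
    (fun S _ ↦ swapSet_swapSet x y S) (fun _ _ ↦ rfl)

lemma succ_notMem_of_mem_cubeSlice {n m : ℕ} {T : Finset ℤ} (hT : T ∈ cubeSlice n m) :
    (n : ℤ) + 1 ∉ T := fun h ↦ by
  have := mem_Icc.mp ((mem_powersetCard.mp hT).1 h)
  omega

lemma cubeSlice_succ_succ (n m : ℕ) :
    cubeSlice (n + 1) (m + 1)
      = cubeSlice n (m + 1) ∪ (cubeSlice n m).image (insert ((n : ℤ) + 1)) := by
  have hIcc : Icc (1 : ℤ) ((n + 1 : ℕ) : ℤ) = insert ((n : ℤ) + 1) (Icc (1 : ℤ) n) := by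
    push_cast
    exact (insert_Icc_right_eq_Icc_add_one (by omega)).symm
  rw [cubeSlice, hIcc, powersetCard_succ_insert (by simp)]
  rfl

lemma disjoint_cubeSlice_image_insert (n m : ℕ) :
    Disjoint (cubeSlice n (m + 1)) ((cubeSlice n m).image (insert ((n : ℤ) + 1))) := by
  simp only [disjoint_left, mem_image, not_exists, not_and]
  rintro S hS T - rfl
  exact succ_notMem_of_mem_cubeSlice hS (mem_insert_self _ _)

lemma injOn_insert_cubeSlice (n m : ℕ) :
    Set.InjOn (insert ((n : ℤ) + 1)) (cubeSlice n m : Set (Finset ℤ)) := by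
  intro T hT T' hT' h
  simpa [erase_insert (succ_notMem_of_mem_cubeSlice hT),
    erase_insert (succ_notMem_of_mem_cubeSlice hT')] using congrArg (erase · ((n : ℤ) + 1)) h

lemma sum_cubeSlice_succ_succ (n m : ℕ) (h : Finset ℤ → ℝ) :
    ∑ S ∈ cubeSlice (n + 1) (m + 1), h S
      = ∑ S ∈ cubeSlice n (m + 1), h S
        + ∑ T ∈ cubeSlice n m, h (insert ((n : ℤ) + 1) T) := by
  rw [cubeSlice_succ_succ, sum_union (disjoint_cubeSlice_image_insert n m),
    sum_image (injOn_insert_cubeSlice n m)]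

def swapEnergy (n m : ℕ) (f : Finset ℤ → ℝ) (x y : ℤ) : ℝ :=
  ∑ S ∈ cubeSlice n m, (f (swapSet x y S) - f S) ^ 2

def dirichlet (n m : ℕ) (f : Finset ℤ → ℝ) : ℝ :=
  ∑ x ∈ Ico (1 : ℤ) n, swapEnergy n m f x (x + 1)

lemma swapEnergy_nonneg (n m : ℕ) (f : Finset ℤ → ℝ) (x y : ℤ) :
    0 ≤ swapEnergy n m f x y :=
  sum_nonneg fun _ _ ↦ sq_nonneg _

lemma dirichlet_nonneg (n m : ℕ) (f : Finset ℤ → ℝ) : 0 ≤ dirichlet n m f :=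
  sum_nonneg fun _ _ ↦ swapEnergy_nonneg _ _ _ _ _

lemma mul_add_add_sq_le {d : ℝ} (hd : 0 ≤ d) (a b c : ℝ) :
    d * (a + b + c) ^ 2 ≤ (d + 1) * b ^ 2 + 2 * d * (d + 1) * (a ^ 2 + c ^ 2) := by
  nlinarith [sq_nonneg (d * (a + c) - b), sq_nonneg (a - c), mul_nonneg hd (sq_nonneg (a - c))]

/-- Conjugating `(x, y)` by `(y, y + 1)` gives `(x, y + 1)`; split the square with the weight
`d` of `mul_add_add_sq_le`. -/
lemma mul_swapEnergy_succ_le (n m : ℕ) (f : Finset ℤ → ℝ) {x y : ℤ} (hx : 1 ≤ x)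
    (hxy : x < y) (hy : y + 1 ≤ n) {d : ℝ} (hd : 0 ≤ d) :
    d * swapEnergy n m f x (y + 1)
      ≤ (d + 1) * swapEnergy n m f x y + 4 * d * (d + 1) * swapEnergy n m f y (y + 1) := by
  have hIcc : ∀ z, x ≤ z → z ≤ y + 1 → z ∈ Icc (1 : ℤ) n :=
    fun z _ _ ↦ mem_Icc.mpr (by omega)
  have hx' := hIcc x le_rfl (by omega)
  have hy' := hIcc y hxy.le (by omega)
  have hy1 := hIcc (y + 1) (by omega) le_rfl
  let S' := fun S ↦ swapSet y (y + 1) S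
  let S'' := fun S ↦ swapSet x y (S' S)
  calc d * swapEnergy n m f x (y + 1)
      = ∑ S ∈ cubeSlice n m, d * ((f (swapSet y (y + 1) (S'' S)) - f (S'' S))
          + (f (S'' S) - f (S' S)) + (f (S' S) - f S)) ^ 2 := by
        rw [swapEnergy, mul_sum]
        refine sum_congr rfl fun S _ ↦ ?_
        simp only [S'', S', swapSet_conj hxy]
        ring
    _ ≤ ∑ S ∈ cubeSlice n m, ((d + 1) * (f (S'' S) - f (S' S)) ^ 2
          + 2 * d * (d + 1) * ((f (swapSet y (y + 1) (S'' S)) - f (S'' S)) ^ 2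
            + (f (S' S) - f S) ^ 2)) :=
        sum_le_sum fun S _ ↦ mul_add_add_sq_le hd _ _ _
    _ = (d + 1) * swapEnergy n m f x y + 4 * d * (d + 1) * swapEnergy n m f y (y + 1) := by
        rw [sum_add_distrib, ← mul_sum, ← mul_sum, sum_add_distrib]
        simp only [S'', S']
        rw [sum_cubeSlice_swapSet hy' hy1 fun U ↦ (f (swapSet x y U) - f U) ^ 2,
          sum_cubeSlice_swapSet hy' hy1 fun U ↦
            (f (swapSet y (y + 1) (swapSet x y U)) - f (swapSet x y U)) ^ 2,
          sum_cubeSlice_swapSet hx' hy' fun U ↦ (f (swapSet y (y + 1) U) - f U) ^ 2,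
          swapEnergy, swapEnergy]
        ring

lemma swapEnergy_le_sum_Ico (n m : ℕ) (f : Finset ℤ → ℝ) {x : ℤ} (hx : 1 ≤ x) :
    ∀ y, x + 1 ≤ y → y ≤ n →
      swapEnergy n m f x y ≤ 4 * (y - x) * ∑ z ∈ Ico x y, swapEnergy n m f z (z + 1) := by
  refine Int.leInduction (fun _ ↦ ?_) (fun y hxy IH hn ↦ ?_)
  · rw [show Ico x (x + 1) = {x} by ext; simp; omega]
    simp only [sum_singleton, Int.cast_add, Int.cast_one, add_sub_cancel_left, mul_one]
    linarith [swapEnergy_nonneg n m f x (x + 1)]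
  set d : ℝ := y - x
  have hd : 0 < d := by simp only [d]; exact_mod_cast (by omega : (0 : ℤ) < y - x)
  have hstep : d * swapEnergy n m f x (y + 1)
      ≤ d * (4 * (d + 1) * (∑ z ∈ Ico x y, swapEnergy n m f z (z + 1)
        + swapEnergy n m f y (y + 1))) := by
    nlinarith [mul_swapEnergy_succ_le n m f hx (by omega) hn hd.le, IH (by omega)]
  rw [← insert_Ico_right_eq_Ico_add_one (by omega), sum_insert (by simp),
    add_comm (swapEnergy n m f y (y + 1)),
    show ((y + 1 : ℤ) : ℝ) - x = d + 1 by push_cast; ring]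
  exact le_of_mul_le_mul_left hstep hd

lemma swapEnergy_le_dirichlet (n m : ℕ) (f : Finset ℤ → ℝ) {x y : ℤ} (hx : 1 ≤ x)
    (hxy : x < y) (hy : y ≤ n) : swapEnergy n m f x y ≤ 4 * (y - x) * dirichlet n m f := by
  refine (swapEnergy_le_sum_Ico n m f hx y hxy hy).trans (mul_le_mul_of_nonneg_left ?_ ?_)
  · exact sum_le_sum_of_subset_of_nonneg (Ico_subset_Ico hx (by omega))
      fun _ _ _ ↦ swapEnergy_nonneg _ _ _ _ _
  · have : (x : ℝ) < y := by exact_mod_cast hxy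
    linarith

lemma swapEnergy_succ_succ (n m : ℕ) (f : Finset ℤ → ℝ) {x : ℤ} (hx : x + 1 ≤ n) :
    swapEnergy (n + 1) (m + 1) f x (x + 1)
      = swapEnergy n (m + 1) f x (x + 1)
        + swapEnergy n m (f ∘ insert ((n : ℤ) + 1)) x (x + 1) := by
  rw [swapEnergy, sum_cubeSlice_succ_succ]
  simp only [swapEnergy, Function.comp, swapSet_insert_of_ne (by omega : (n : ℤ) + 1 ≠ x)
    (by omega : (n : ℤ) + 1 ≠ x + 1)]

lemma dirichlet_add_dirichlet_le (n m : ℕ) (f : Finset ℤ → ℝ) :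
    dirichlet n (m + 1) f + dirichlet n m (f ∘ insert ((n : ℤ) + 1))
      ≤ dirichlet (n + 1) (m + 1) f := calc
  _ = ∑ x ∈ Ico (1 : ℤ) n, swapEnergy (n + 1) (m + 1) f x (x + 1) := by
    rw [dirichlet, dirichlet, ← sum_add_distrib]
    exact sum_congr rfl fun x hx ↦ (swapEnergy_succ_succ n m f (by simp at hx; omega)).symm
  _ ≤ _ := sum_le_sum_of_subset_of_nonneg (Ico_subset_Ico_right (by omega))
    fun _ _ _ ↦ swapEnergy_nonneg _ _ _ _ _

/-- `(T, x) ↦ insert x T` covers each configuration of `m + 1` particles exactly `m + 1` times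
(`sum_sigma_sdiff_insert`). -/
def insertPairs (n m : ℕ) : Finset ((_ : Finset ℤ) × ℤ) :=
  (cubeSlice n m).sigma (Icc (1 : ℤ) n \ ·)

/-- Moving the particle at `n + 1` to an empty site `x ≤ n` is the transposition `(x, n + 1)`,
whose cost is controlled by `swapEnergy_le_dirichlet`. -/
lemma sum_insertPairs_sq_sub_le (n m : ℕ) (f : Finset ℤ → ℝ) :
    ∑ p ∈ insertPairs n m,
        (f (insert ((n : ℤ) + 1) p.1) - f (insert p.2 p.1)) ^ 2
      ≤ 4 * n ^ 2 * dirichlet (n + 1) (m + 1) f := by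
  set g := fun x S ↦ (f (swapSet x ((n : ℤ) + 1) S) - f S) ^ 2
  have hterm : ∀ p ∈ insertPairs n m,
      (f (insert ((n : ℤ) + 1) p.1) - f (insert p.2 p.1)) ^ 2
        = g p.2 (insert ((n : ℤ) + 1) p.1) := by
    rintro ⟨T, x⟩ hp
    obtain ⟨hT, hx⟩ := mem_sigma.mp hp
    dsimp only [g]
    rw [swapSet_insert_right (mem_sdiff.mp hx).2 (succ_notMem_of_mem_cubeSlice hT)]
    ring
  have hx : ∀ x ∈ Icc (1 : ℤ) n, ∑ T ∈ cubeSlice n m, g x (insert ((n : ℤ) + 1) T)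
      ≤ 4 * n * dirichlet (n + 1) (m + 1) f := by
    intro x hx
    obtain ⟨hx1, hxn⟩ := mem_Icc.mp hx
    calc _ ≤ ∑ S ∈ cubeSlice (n + 1) (m + 1), g x S := by
          rw [sum_cubeSlice_succ_succ]
          exact le_add_of_nonneg_left (sum_nonneg fun _ _ ↦ sq_nonneg _)
      _ ≤ 4 * (((n : ℤ) + 1 : ℤ) - x) * dirichlet (n + 1) (m + 1) f :=
          swapEnergy_le_dirichlet _ _ f hx1 (by omega) (by push_cast; omega)
      _ ≤ 4 * n * dirichlet (n + 1) (m + 1) f := by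
          gcongr
          · exact dirichlet_nonneg _ _ _
          · have : (1 : ℝ) ≤ x := by exact_mod_cast hx1
            push_cast
            linarith
  calc _ = ∑ p ∈ insertPairs n m, g p.2 (insert ((n : ℤ) + 1) p.1) := sum_congr rfl hterm
    _ ≤ ∑ T ∈ cubeSlice n m, ∑ x ∈ Icc (1 : ℤ) n, g x (insert ((n : ℤ) + 1) T) := by
        rw [insertPairs, sum_sigma]
        exact sum_le_sum fun T _ ↦ sum_le_sum_of_subset_of_nonneg sdiff_subset
          fun _ _ _ ↦ sq_nonneg _
    _ ≤ ∑ x ∈ Icc (1 : ℤ) n, 4 * n * dirichlet (n + 1) (m + 1) f := by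
        rw [sum_comm]
        exact sum_le_sum hx
    _ = 4 * n ^ 2 * dirichlet (n + 1) (m + 1) f := by
        simp only [sum_const, Int.card_Icc, add_sub_cancel_right, Int.toNat_natCast,
          nsmul_eq_mul]
        ring

lemma card_insertPairs_eq_mul_sub {n m : ℕ} (hm : m ≤ n) :
    (#(insertPairs n m) : ℝ) = #(cubeSlice n m) * (n - m) := by
  simp only [insertPairs, cubeSlice, card_sigma_sdiff, Int.card_Icc, add_sub_cancel_right,
    Int.toNat_natCast, card_powersetCard]
  push_cast [hm]
  rfl

lemma card_insertPairs_eq_succ_mul (n m : ℕ) :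
    (#(insertPairs n m) : ℝ) = (m + 1) * #(cubeSlice n (m + 1)) := by
  have h := sum_sigma_sdiff_insert (Icc (1 : ℤ) n) m fun _ ↦ (1 : ℝ)
  simp only [sum_const, nsmul_eq_mul, mul_one] at h
  exact h

/-- Both slice means are averages over `insertPairs n m`: of `f (T ∪ {n + 1})` and of
`f (T ∪ {x})` respectively. -/
lemma mean_sub_mean_eq_sum_insertPairs {n m : ℕ} (hm : m < n) (f : Finset ℤ → ℝ) :
    (∑ T ∈ cubeSlice n m, f (insert ((n : ℤ) + 1) T)) / #(cubeSlice n m)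
        - (∑ U ∈ cubeSlice n (m + 1), f U) / #(cubeSlice n (m + 1))
      = (∑ p ∈ insertPairs n m, (f (insert ((n : ℤ) + 1) p.1) - f (insert p.2 p.1)))
        / #(insertPairs n m) := by
  have hsub : (0 : ℝ) < n - m := sub_pos.mpr (by exact_mod_cast hm)
  have ha : (0 : ℝ) < #(cubeSlice n m) := card_cubeSlice_pos hm.le
  have hb : (0 : ℝ) < #(cubeSlice n (m + 1)) := card_cubeSlice_pos hm
  have hP : ∑ p ∈ insertPairs n m, f (insert ((n : ℤ) + 1) p.1)
      = (n - m) * ∑ T ∈ cubeSlice n m, f (insert ((n : ℤ) + 1) T) := by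
    rw [insertPairs, sum_sigma, mul_sum]
    refine sum_congr rfl fun T hT ↦ ?_
    obtain ⟨hTA, hTm⟩ := mem_powersetCard.mp hT
    dsimp only
    rw [sum_const, card_sdiff_of_subset hTA, hTm, nsmul_eq_mul]
    simp [hm.le]
  have hR : ∑ p ∈ insertPairs n m, f (insert p.2 p.1)
      = (m + 1) * ∑ U ∈ cubeSlice n (m + 1), f U :=
    sum_sigma_sdiff_insert _ m f
  rw [sum_sub_distrib, hP, hR, sub_div]
  congr 1
  · rw [card_insertPairs_eq_mul_sub hm.le]
    field_simp
  · rw [card_insertPairs_eq_succ_mul]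
    field_simp

lemma between_term_le (n m : ℕ) (hm : m < n) (f : Finset ℤ → ℝ) :
    #(cubeSlice n (m + 1)) * #(cubeSlice n m) / (#(cubeSlice n (m + 1)) + #(cubeSlice n m))
        * ((∑ U ∈ cubeSlice n (m + 1), f U) / #(cubeSlice n (m + 1))
          - (∑ T ∈ cubeSlice n m, f (insert ((n : ℤ) + 1) T)) / #(cubeSlice n m)) ^ 2
      ≤ 4 * n ^ 2 / (n + 1) * dirichlet (n + 1) (m + 1) f := by
  have hleft := card_insertPairs_eq_mul_sub hm.le
  have hright := card_insertPairs_eq_succ_mul n m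
  have ha : (0 : ℝ) < #(cubeSlice n m) := card_cubeSlice_pos hm.le
  have hb : (0 : ℝ) < #(cubeSlice n (m + 1)) := card_cubeSlice_pos hm
  have hK : (0 : ℝ) < #(insertPairs n m) := by rw [hright]; positivity
  set K : ℝ := (#(insertPairs n m) : ℝ)
  have hcoef : #(cubeSlice n (m + 1)) * #(cubeSlice n m)
      / (#(cubeSlice n (m + 1)) + #(cubeSlice n m) : ℝ) = K / (n + 1) := by
    rw [div_eq_div_iff (add_pos hb ha).ne' (by positivity)]
    linear_combination (-(#(cubeSlice n (m + 1)) : ℝ)) * hleft - #(cubeSlice n m) * hright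
  rw [hcoef, ← neg_sub, neg_sq, mean_sub_mean_eq_sum_insertPairs hm, div_pow]
  calc K / (n + 1)
        * ((∑ p ∈ insertPairs n m, (f (insert ((n : ℤ) + 1) p.1) - f (insert p.2 p.1))) ^ 2
          / K ^ 2)
      ≤ K / (n + 1) * (K * (∑ p ∈ insertPairs n m,
          (f (insert ((n : ℤ) + 1) p.1) - f (insert p.2 p.1)) ^ 2) / K ^ 2) := by
        gcongr
        exact sq_sum_le_card_mul_sum_sq
    _ = (∑ p ∈ insertPairs n m,
          (f (insert ((n : ℤ) + 1) p.1) - f (insert p.2 p.1)) ^ 2) / (n + 1) := by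
        field_simp
    _ ≤ 4 * n ^ 2 / (n + 1) * dirichlet (n + 1) (m + 1) f := by
        rw [div_mul_eq_mul_div]
        gcongr
        exact sum_insertPairs_sq_sub_le n m f

lemma sqDev_cubeSlice_succ_succ_le (n m : ℕ) (hm : m < n) (f : Finset ℤ → ℝ) :
    sqDev (cubeSlice (n + 1) (m + 1)) f
      ≤ sqDev (cubeSlice n (m + 1)) f + sqDev (cubeSlice n m) (f ∘ insert ((n : ℤ) + 1))
        + 4 * n ^ 2 / (n + 1) * dirichlet (n + 1) (m + 1) f := by
  rw [cubeSlice_succ_succ, sqDev_union (disjoint_cubeSlice_image_insert n m),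
    sqDev_image (injOn_insert_cubeSlice n m), sum_image (injOn_insert_cubeSlice n m),
    card_image_of_injOn (injOn_insert_cubeSlice n m)]
  exact add_le_add_right (between_term_le n m hm f) _

lemma sqDev_cubeSlice_le_of_choose_le_one {n m : ℕ} (h : n.choose m ≤ 1)
    (f : Finset ℤ → ℝ) :
    sqDev (cubeSlice n m) f ≤ 4 * n ^ 2 * dirichlet n m f := by
  rw [sqDev_of_card_le_one (by rwa [card_cubeSlice])]
  have := dirichlet_nonneg n m f
  positivity

theorem sqDev_cubeSlice_le (n m : ℕ) (f : Finset ℤ → ℝ) :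
    sqDev (cubeSlice n m) f ≤ 4 * n ^ 2 * dirichlet n m f := by
  induction n generalizing m f with
  | zero => exact sqDev_cubeSlice_le_of_choose_le_one (by cases m <;> simp) f
  | succ n ih =>
    obtain _ | m := m
    · exact sqDev_cubeSlice_le_of_choose_le_one (by simp) f
    obtain hm | hm := le_or_gt n m
    · refine sqDev_cubeSlice_le_of_choose_le_one ?_ f
      obtain rfl | hm := hm.eq_or_lt
      · simp
      · simp [Nat.choose_eq_zero_of_lt (by omega : n + 1 < m + 1)]
    have hD := dirichlet_nonneg (n + 1) (m + 1) f
    have hsplit := dirichlet_add_dirichlet_le n m f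
    have hcoef : 4 * (n : ℝ) ^ 2 / (n + 1) ≤ 4 * (2 * n + 1) := by
      rw [div_le_iff₀ (by positivity)]
      nlinarith
    calc _ ≤ 4 * n ^ 2 * dirichlet n (m + 1) f
          + 4 * n ^ 2 * dirichlet n m (f ∘ insert ((n : ℤ) + 1))
          + 4 * n ^ 2 / (n + 1) * dirichlet (n + 1) (m + 1) f := by
          grw [sqDev_cubeSlice_succ_succ_le n m hm f, ih, ih]
      _ ≤ 4 * n ^ 2 * dirichlet (n + 1) (m + 1) f
          + 4 * (2 * n + 1) * dirichlet (n + 1) (m + 1) f := by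
          rw [← mul_add]
          gcongr
      _ = 4 * ((n + 1 : ℕ) : ℝ) ^ 2 * dirichlet (n + 1) (m + 1) f := by
          push_cast
          ring

open Polynomial in
/-- The substitution `β = t / (1 + t)` turns the identity into the vanishing of the polynomial
`∑ c m tᵐ` on `[0, ∞)`. -/
lemma eq_zero_of_sum_pow_mul_pow_eq_zero {n : ℕ} {c : ℕ → ℝ}
    (h : ∀ β ∈ Set.Icc (0 : ℝ) 1,
      ∑ m ∈ range (n + 1), β ^ m * (1 - β) ^ (n - m) * c m = 0)
    {m : ℕ} (hm : m ≤ n) : c m = 0 := by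
  set P : ℝ[X] := ∑ k ∈ range (n + 1), C (c k) * X ^ k
  have hP : ∀ t : ℝ, 0 ≤ t → P.eval t = 0 := by
    intro t ht
    have ht1 : 0 < 1 + t := by linarith
    have hβ : t / (1 + t) ∈ Set.Icc (0 : ℝ) 1 :=
      ⟨by positivity, (div_le_one ht1).mpr (by linarith)⟩
    rw [← mul_eq_zero_of_right ((1 + t) ^ n) (h _ hβ), mul_sum]
    simp only [P, eval_finsetSum, eval_mul, eval_C, eval_pow, eval_X]
    refine sum_congr rfl fun k hk ↦ ?_
    have hkn : n = k + (n - k) := by have := mem_range.mp hk; omega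
    rw [hkn, pow_add, Nat.add_sub_cancel_left, one_sub_div ht1.ne', add_sub_cancel_right,
      div_pow, div_pow, one_pow]
    field_simp
  have hP0 : P = 0 := eq_zero_of_infinite_isRoot P
    ((Set.Ici_infinite 0).mono fun t ht ↦ hP t ht)
  have := congrArg (coeff · m) hP0
  simpa [P, finsetSum_coeff, coeff_C_mul_X_pow, Nat.lt_succ_of_le hm] using this

lemma LocalOn.comp {A : Finset ℤ} {f : Cfg → ℝ} (hf : LocalOn A f) (h : ℝ → ℝ) :
    LocalOn A (h ∘ f) :=
  fun η ξ hηξ ↦ congrArg h (hf η ξ hηξ)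

lemma LocalOn.discGrad {A : Finset ℤ} {f : Cfg → ℝ} (hf : LocalOn A f) {x y : ℤ}
    (hx : x ∈ A) (hy : y ∈ A) : LocalOn A (discGrad x y f) := by
  intro η ξ hηξ
  have hswap : ∀ z ∈ A, swapCfg x y η z = swapCfg x y ξ z := by
    intro z hz
    simp only [swapCfg]
    split_ifs <;> simp_all
  simp only [_root_.discGrad, hf _ _ hswap, hf η ξ hηξ]

def cfgCylinder (A S : Finset ℤ) : Set Cfg := {η | ∀ x ∈ A, η x = cfgOf S x}

lemma measurableSet_cfgCylinder (A S : Finset ℤ) : MeasurableSet (cfgCylinder A S) := by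
  have : cfgCylinder A S = ⋂ x ∈ A, (fun η : Cfg ↦ η x) ⁻¹' {cfgOf S x} := by
    ext η; simp [cfgCylinder]
  rw [this]
  exact A.measurableSet_biInter fun x _ ↦ measurable_pi_apply x (measurableSet_singleton _)

lemma mem_cfgCylinder_iff {A S : Finset ℤ} (hS : S ⊆ A) {η : Cfg} :
    η ∈ cfgCylinder A S ↔ S = A.filter (fun x ↦ η x = true) := by
  constructor
  · intro h
    ext z
    rw [mem_filter]
    constructor
    · intro hz
      exact ⟨hS hz, by simp [h z (hS hz), cfgOf, hz]⟩
    · rintro ⟨hzA, hz⟩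
      simpa [h z hzA, cfgOf] using hz
  · rintro rfl x hx
    simp [cfgOf, hx]

lemma LocalOn.eq_sum_indicator {A : Finset ℤ} {g : Cfg → ℝ} (hg : LocalOn A g) (η : Cfg) :
    g η = ∑ S ∈ A.powerset, (cfgCylinder A S).indicator (fun _ ↦ g (cfgOf S)) η := by
  set T := A.filter (fun x ↦ η x = true)
  have hT : T ⊆ A := filter_subset _ _
  have hη : η ∈ cfgCylinder A T := (mem_cfgCylinder_iff hT).mpr rfl
  rw [sum_eq_single_of_mem T (mem_powerset.mpr hT), Set.indicator_of_mem hη]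
  · exact hg _ _ hη
  · intro S hS hne
    exact Set.indicator_of_notMem (fun h ↦ hne ((mem_cfgCylinder_iff (mem_powerset.mp hS)).mp h))
      _

lemma prod_ite_cfgOf {A S : Finset ℤ} (hS : S ⊆ A) (ρ : ℝ) :
    ∏ x ∈ A, (if cfgOf S x then ρ else 1 - ρ) = ρ ^ #S * (1 - ρ) ^ (#A - #S) := by
  simp only [cfgOf, decide_eq_true_eq]
  rw [prod_ite, prod_const, prod_const, filter_mem_eq_inter, inter_eq_right.mpr hS,
    filter_notMem_eq_sdiff, card_sdiff_of_subset hS]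

/-- The cylinder probabilities of `IsBernoulliProduct` are exactly the coefficients of `phi`. -/
lemma integral_eq_phi {ρ : ℝ} {μ : Measure Cfg} (hμ : IsBernoulliProduct ρ μ)
    {A : Finset ℤ} {g : Cfg → ℝ} (hg : LocalOn A g) : ∫ η, g η ∂μ = phi A g ρ := by
  have := hμ.1
  rw [integral_congr_ae (Filter.Eventually.of_forall hg.eq_sum_indicator),
    integral_finsetSum _ fun S _ ↦ (integrable_const _).indicator (measurableSet_cfgCylinder A S)]
  refine sum_congr rfl fun S hS ↦ ?_
  rw [integral_indicator_const _ (measurableSet_cfgCylinder A S), smul_eq_mul, Measure.real,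
    cfgCylinder, hμ.2, prod_ite_cfgOf (mem_powerset.mp hS)]

lemma phi_Icc_eq_sum_cubeSlice (ℓ : ℕ) (g : Cfg → ℝ) (β : ℝ) :
    phi (Icc (1 : ℤ) ℓ) g β
      = ∑ m ∈ range (ℓ + 1),
          β ^ m * (1 - β) ^ (ℓ - m) * ∑ S ∈ cubeSlice ℓ m, g (cfgOf S) := by
  have hA : #(Icc (1 : ℤ) ℓ) = ℓ := by simp
  rw [phi, sum_powerset, hA]
  refine sum_congr rfl fun m _ ↦ ?_
  rw [mul_sum]
  refine sum_congr rfl fun S hS ↦ ?_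
  rw [(mem_powersetCard.mp hS).2]

lemma integral_eq_sum_cubeSlice {ℓ : ℕ} {ρ : ℝ} {μ : Measure Cfg}
    (hμ : IsBernoulliProduct ρ μ) {g : Cfg → ℝ} (hg : LocalOn (Icc (1 : ℤ) ℓ) g) :
    ∫ η, g η ∂μ
      = ∑ m ∈ range (ℓ + 1),
          ρ ^ m * (1 - ρ) ^ (ℓ - m) * ∑ S ∈ cubeSlice ℓ m, g (cfgOf S) := by
  rw [integral_eq_phi hμ hg, phi_Icc_eq_sum_cubeSlice]

lemma sum_cubeSlice_eq_zero_of_phi_eq_zero {ℓ : ℕ} {f : Cfg → ℝ}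
    (hphi : ∀ β ∈ Set.Icc (0 : ℝ) 1, phi (Icc (1 : ℤ) ℓ) f β = 0) {m : ℕ}
    (hm : m ≤ ℓ) :
    ∑ S ∈ cubeSlice ℓ m, f (cfgOf S) = 0 :=
  eq_zero_of_sum_pow_mul_pow_eq_zero (c := fun m ↦ ∑ S ∈ cubeSlice ℓ m, f (cfgOf S))
    (fun β hβ ↦ (phi_Icc_eq_sum_cubeSlice ℓ f β).symm.trans (hphi β hβ)) hm

lemma integral_discGrad_sq_eq_sum_swapEnergy {ℓ : ℕ} {ρ : ℝ} {μ : Measure Cfg}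
    (hμ : IsBernoulliProduct ρ μ) {f : Cfg → ℝ} (hf : LocalOn (Icc (1 : ℤ) ℓ) f)
    {x : ℤ} (hx : x ∈ Ico (1 : ℤ) ℓ) :
    ∫ η, discGrad x (x + 1) f η ^ 2 ∂μ
      = ∑ m ∈ range (ℓ + 1),
          ρ ^ m * (1 - ρ) ^ (ℓ - m) * swapEnergy ℓ m (fun S ↦ f (cfgOf S)) x (x + 1) := by
  obtain ⟨hx1, hxℓ⟩ := mem_Ico.mp hx
  have hgrad := hf.discGrad (mem_Icc.mpr ⟨hx1, hxℓ.le⟩) (mem_Icc.mpr ⟨by omega, hxℓ⟩)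
  rw [integral_eq_sum_cubeSlice (g := fun η ↦ discGrad x (x + 1) f η ^ 2) hμ
    (hgrad.comp (· ^ 2))]
  simp only [swapEnergy, _root_.discGrad, swapCfg_cfgOf]

/-- **Spectral gap inequality for symmetric simple exclusion on a segment**
(Proposition 4.3). There is a universal constant `κ₀` such that for every `ℓ`, every
`ρ ∈ [0,1]` and every local `f` with support in `{1,…,ℓ}` and `φ_f(β) = 0` for all
`β ∈ [0,1]`, `∫ f² dν_ρ ≤ κ₀ ℓ² E_ℓ(f)` where
`E_ℓ(f) = ∑_{x=1}^{ℓ−1} ∫ (∇_{x,x+1} f)² dν_ρ`. -/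
theorem spectral_gap_exclusion :
    ∃ κ₀ : ℝ, ∀ (ℓ : ℕ) (ρ : ℝ), ρ ∈ Set.Icc (0 : ℝ) 1 →
      ∀ μ : Measure Cfg, IsBernoulliProduct ρ μ →
        ∀ f : Cfg → ℝ, LocalOn (Finset.Icc (1 : ℤ) (ℓ : ℤ)) f →
          (∀ β ∈ Set.Icc (0 : ℝ) 1, phi (Finset.Icc (1 : ℤ) (ℓ : ℤ)) f β = 0) →
          ∫ η, f η ^ 2 ∂μ
            ≤ κ₀ * (ℓ : ℝ) ^ 2
                * ∑ x ∈ Finset.Ico (1 : ℤ) (ℓ : ℤ),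
                    ∫ η, (discGrad x (x + 1) f η) ^ 2 ∂μ := by
  refine ⟨4, fun ℓ ρ hρ μ hμ f hf hphi ↦ ?_⟩
  set F := fun S ↦ f (cfgOf S)
  have hweight : ∀ m, 0 ≤ ρ ^ m * (1 - ρ) ^ (ℓ - m) := fun m ↦
    mul_nonneg (pow_nonneg hρ.1 _) (pow_nonneg (sub_nonneg.mpr hρ.2) _)
  calc ∫ η, f η ^ 2 ∂μ
      = ∑ m ∈ range (ℓ + 1), ρ ^ m * (1 - ρ) ^ (ℓ - m) * sqDev (cubeSlice ℓ m) F := by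
        rw [integral_eq_sum_cubeSlice (g := fun η ↦ f η ^ 2) hμ (hf.comp (· ^ 2))]
        refine sum_congr rfl fun m hm ↦ ?_
        rw [sqDev_of_sum_eq_zero (sum_cubeSlice_eq_zero_of_phi_eq_zero hphi
          (Nat.lt_succ_iff.mp (mem_range.mp hm)))]
    _ ≤ ∑ m ∈ range (ℓ + 1),
          ρ ^ m * (1 - ρ) ^ (ℓ - m) * (4 * ℓ ^ 2 * dirichlet ℓ m F) := by
        gcongr with m
        · exact hweight m
        · exact sqDev_cubeSlice_le ℓ m F
    _ = 4 * ℓ ^ 2 * ∑ x ∈ Ico (1 : ℤ) ℓ, ∫ η, discGrad x (x + 1) f η ^ 2 ∂μ := by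
        simp only [sum_congr rfl fun x hx ↦ integral_discGrad_sq_eq_sum_swapEnergy hμ hf hx,
          dirichlet, mul_sum]
        rw [sum_comm]
        exact sum_congr rfl fun _ _ ↦ sum_congr rfl fun _ _ ↦ by ring
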